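/- arXiv:2202.12277 — 2 statements merged into one kernel-verified Lean document; each statement's English description precedes it below -/
import Mathlib

section
/- Let Δ(n) = {x ∈ ℝⁿ : x_i ≥ 0 for all i, ∑_{i=1}^n x_i = 1}, C = cone({1} × Δ(n)) ⊆ ℝ^{n+1}, and C° = {(t, y) ∈ ℝ × ℝⁿ : max_i y_i ≤ −t} its polar cone. Fix u = (ũ, û) ∈ ℝ × ℝⁿ. Then: (i) the map t ↦ t + ∑_{i=1}^n max(û_i + t, 0) is strictly increasing on ℝ and there is a unique t* ∈ ℝ with t* + ∑_{i=1}^n max(û_i + t*, 0) = ũ; (ii) if u ∉ C° (equivalently max_i û_i > −ũ), then the Euclidean orthogonal projection of u onto C° is π_{C°}(u) = (t*, ŷ) where ŷ_i = min(−t*, û_i) for every i ∈ [n]. -/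
set_option autoImplicit false

open scoped RealInnerProductSpace
open Finset

noncomputable section

/-- The lifted vector `(t, y) ∈ ℝ × ℝⁿ = ℝ^{n+1}`. -/
def pr {n : ℕ} (t : ℝ) (y : EuclideanSpace ℝ (Fin n)) :
    EuclideanSpace ℝ (Fin (n + 1)) :=
  WithLp.toLp 2 (Fin.cons t (fun i => y i) : Fin (n + 1) → ℝ)

/-- `p` is the Euclidean orthogonal projection of `u` onto the set `S`. -/
def IsProjOn {E : Type*} [NormedAddCommGroup E] [InnerProductSpace ℝ E]
    (u : E) (S : Set E) (p : E) : Prop :=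
  p ∈ S ∧ ∀ z ∈ S, dist u p ≤ dist u z

/-- The polar of the simplex cone: `C° = {(t, y) : max_i y_i ≤ −t} ⊆ ℝ^{n+1}`. -/
def simplexPolar (n : ℕ) : Set (EuclideanSpace ℝ (Fin (n + 1))) :=
  {u | ∀ i : Fin n, u i.succ ≤ -(u 0)}

/-!
A point `p ∈ S` is the projection of `u` onto `S` as soon as `⟪u - p, z - p⟫ ≤ 0` for all
`z ∈ S`. For `p = (t*, ŷ)` the residual `u - p` is `(∑ᵢ mᵢ, m)` with `mᵢ = max(ûᵢ + t*, 0)`, its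
first coordinate by the defining equation of `t*`. Hence `⟪u - p, z - p⟫ = ∑ᵢ mᵢ (z₀ - t* + zᵢ - ŷᵢ)`,
and wherever `mᵢ > 0` we have `ŷᵢ = -t*`, so the term is `mᵢ (z₀ + zᵢ) ≤ 0` for `z ∈ C°`.
The equation for `t*` has exactly one root because its left side is the identity plus a
continuous monotone function that is nonnegative and bounded on `(-∞, 0]`.
-/

section Threshold

variable {ι : Type*} [Fintype ι] (a : ι → ℝ)

theorem strictMono_add_sum_max_add_zero : StrictMono fun t : ℝ => t + ∑ i, max (a i + t) 0 :=
  strictMono_id.add_monotone fun _ _ hst => by gcongr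

theorem surjective_add_sum_max_add_zero :
    Function.Surjective fun t : ℝ => t + ∑ i, max (a i + t) 0 := by
  refine Continuous.surjective (by fun_prop) ?_ ?_
  · exact Filter.tendsto_atTop_mono
      (fun t => le_add_of_nonneg_right (sum_nonneg fun i _ => le_max_right _ 0))
      Filter.tendsto_id
  · refine Filter.tendsto_atBot_mono' _ ?_
      (Filter.tendsto_atBot_add_const_right _ (∑ i, max (a i) 0) Filter.tendsto_id)
    filter_upwards [Filter.eventually_le_atBot 0] with t ht
    dsimp only [id]
    gcongr with i
    linarith

end Threshold

theorem isProjOn_of_inner_sub_nonpos {E : Type*} [NormedAddCommGroup E]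
    [InnerProductSpace ℝ E] {u p : E} {S : Set E} (hp : p ∈ S)
    (h : ∀ z ∈ S, ⟪u - p, z - p⟫ ≤ 0) : IsProjOn u S p := by
  refine ⟨hp, fun z hz => ?_⟩
  rw [dist_eq_norm, dist_eq_norm]
  refine le_of_pow_le_pow_left₀ two_ne_zero (norm_nonneg _) ?_
  rw [show u - z = (u - p) - (z - p) by abel, norm_sub_sq_real (u - p) (z - p)]
  nlinarith [h z hz, sq_nonneg ‖z - p‖]

@[simp]
theorem pr_zero {n : ℕ} (t : ℝ) (y : EuclideanSpace ℝ (Fin n)) : pr t y 0 = t := rfl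

@[simp]
theorem pr_succ {n : ℕ} (t : ℝ) (y : EuclideanSpace ℝ (Fin n)) (i : Fin n) :
    pr t y i.succ = y i := by
  simp [pr]

theorem inner_eq_mul_zero_add_sum_succ {n : ℕ} (x y : EuclideanSpace ℝ (Fin (n + 1))) :
    ⟪x, y⟫ = x 0 * y 0 + ∑ i : Fin n, x i.succ * y i.succ := by
  simp [PiLp.inner_apply, Fin.sum_univ_succ, mul_comm]

theorem isProjOn_pr_simplexPolar {n : ℕ} {s t : ℝ} {y : EuclideanSpace ℝ (Fin n)}
    (ht : t + ∑ i, max (y i + t) 0 = s) :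
    IsProjOn (pr s y) (simplexPolar n) (pr t (WithLp.toLp 2 fun i => min (-t) (y i))) := by
  refine isProjOn_of_inner_sub_nonpos (fun i => by simp) fun z hz => ?_
  have residual : ∀ i, y i - min (-t) (y i) = max (y i + t) 0 := fun i => by
    rw [← max_sub_sub_left, sub_neg_eq_add, sub_self]
  simp only [inner_eq_mul_zero_add_sum_succ, PiLp.sub_apply, pr_zero, pr_succ, residual, ← ht,
    add_sub_cancel_left, sum_mul, ← sum_add_distrib]
  refine sum_nonpos fun i _ => ?_
  rcases le_total (y i + t) 0 with h | h
  · simp [max_eq_right h]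
  · rw [max_eq_left h, min_eq_left (by linarith)]
    nlinarith [hz i]

/-- Proposition 1: (i) `t ↦ t + ∑ᵢ max(ûᵢ + t, 0)` is strictly
increasing and takes the value `ũ` at a unique `t*`; (ii) if `max_i ûᵢ > −ũ`,
the Euclidean projection of `u = (ũ, û)` onto `C°` is `(t*, ŷ)` with
`ŷᵢ = min(−t*, ûᵢ)`. -/
theorem stmt15 (n : ℕ) (utld : ℝ) (uhat : EuclideanSpace ℝ (Fin n)) :
    StrictMono (fun t : ℝ => t + ∑ i, max (uhat i + t) 0) ∧
    (∃! tstar : ℝ, tstar + ∑ i, max (uhat i + tstar) 0 = utld) ∧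
    (∀ tstar : ℝ, tstar + ∑ i, max (uhat i + tstar) 0 = utld →
      (∃ i, -utld < uhat i) →
      IsProjOn (pr utld uhat) (simplexPolar n)
        (pr tstar (WithLp.toLp 2 (fun i => min (-tstar) (uhat i))))) :=
  ⟨strictMono_add_sum_max_add_zero uhat,
    Function.Bijective.existsUnique ⟨(strictMono_add_sum_max_add_zero uhat).injective,
      surjective_add_sum_max_add_zero uhat⟩ utld,
    fun _ htstar _ => isProjOn_pr_simplexPolar htstar⟩

end
end

section
/- Let X ⊆ ℝⁿ be a nonempty convex compact set with κ = max_{x∈X} ‖x‖₂ > 0 and C = cone({κ} × X) ⊆ ℝ^{n+1}. Let u ∈ C with u ≠ 0, and write u = β·(κ, x) with β > 0 and x ∈ X. Then for every f ∈ ℝⁿ and every ω > 0, π_C(u + ω·(⟨f, x⟩/κ, −f)) ≠ 0. Consequently, along the CBA⁺ iterates u_t = π_C(u_{t−1} + ω_t v_t) with decisions chosen by the CBA⁺ rule, if u_t ≠ 0 then u_{t'} ≠ 0 for all t' ≥ t. -/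
/-! The payoff `v = (⟨f, x⟩/κ, -f)` is orthogonal to `u = β • (κ, x)`, so
`⟪u + ω v, u⟫ = ‖u‖² > 0`. Hence `u ∈ C` is strictly closer to `u + ω v` than `0` is
(`‖y - u‖² = ‖y‖² - 2⟪y, u⟫ + ‖u‖² < ‖y‖²`), and the projection cannot be `0`.
Along the iterates, the choice rule writes every nonzero `u_t` in this form, so induction applies. -/

set_option autoImplicit false

open scoped RealInnerProductSpace
open Finset

noncomputable section

/-- The conic hull `cone({κ} × X) = {α • (κ, x) : α ≥ 0, x ∈ X}`. -/
def coneLift {n : ℕ} (κ : ℝ) (X : Set (EuclideanSpace ℝ (Fin n))) :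
    Set (EuclideanSpace ℝ (Fin (n + 1))) :=
  {u | ∃ α : ℝ, 0 ≤ α ∧ ∃ x ∈ X, u = α • pr κ x}

theorem IsProjOn.ne_zero_of_sq_norm_lt_two_inner {E : Type*} [NormedAddCommGroup E]
    [InnerProductSpace ℝ E] {y a p : E} {S : Set E} (hp : IsProjOn y S p) (ha : a ∈ S)
    (hya : ‖a‖ ^ 2 < 2 * ⟪y, a⟫) : p ≠ 0 := by
  rintro rfl
  have hdist : ‖y‖ ≤ ‖y - a‖ := by simpa [dist_eq_norm] using hp.2 a ha
  have hsq := pow_le_pow_left₀ (norm_nonneg _) hdist 2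
  rw [norm_sub_sq_real] at hsq
  linarith

theorem pr_inner_pr {n : ℕ} (t s : ℝ) (y z : EuclideanSpace ℝ (Fin n)) :
    ⟪pr t y, pr s z⟫ = t * s + ⟪y, z⟫ := by
  simp [pr, PiLp.inner_apply, RCLike.inner_apply, Fin.sum_univ_succ, mul_comm]

theorem pr_ne_zero {n : ℕ} {t : ℝ} (ht : t ≠ 0) (y : EuclideanSpace ℝ (Fin n)) :
    pr t y ≠ 0 := by
  intro h
  exact ht (by simpa [pr] using congrArg (· 0) h)

theorem smul_pr_mem_coneLift {n : ℕ} {κ β : ℝ} {X : Set (EuclideanSpace ℝ (Fin n))}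
    (hβ : 0 ≤ β) {x : EuclideanSpace ℝ (Fin n)} (hx : x ∈ X) :
    β • pr κ x ∈ coneLift κ X :=
  ⟨β, hβ, x, hx, rfl⟩

theorem inner_pr_payoff_pr_eq_zero {n : ℕ} {κ : ℝ} (hκ : κ ≠ 0)
    (f x : EuclideanSpace ℝ (Fin n)) :
    ⟪pr (⟪f, x⟫ / κ) (-f), pr κ x⟫ = 0 := by
  rw [pr_inner_pr, inner_neg_left, div_mul_cancel₀ _ hκ, add_neg_cancel]

theorem isProjOn_coneLift_update_ne_zero {n : ℕ} {κ β ω : ℝ}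
    {X : Set (EuclideanSpace ℝ (Fin n))} (hκ : κ ≠ 0) (hβ : 0 < β)
    {x : EuclideanSpace ℝ (Fin n)} (hx : x ∈ X) (f : EuclideanSpace ℝ (Fin n))
    {w : EuclideanSpace ℝ (Fin (n + 1))}
    (hw : IsProjOn (β • pr κ x + ω • pr (⟪f, x⟫ / κ) (-f)) (coneLift κ X) w) :
    w ≠ 0 := by
  set a := β • pr κ x
  have ha_ne : a ≠ 0 := smul_ne_zero hβ.ne' (pr_ne_zero hκ x)
  have hinner : ⟪a + ω • pr (⟪f, x⟫ / κ) (-f), a⟫ = ‖a‖ ^ 2 := by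
    rw [inner_add_left, real_inner_self_eq_norm_sq, real_inner_smul_left,
      real_inner_smul_right, inner_pr_payoff_pr_eq_zero hκ]
    ring
  refine hw.ne_zero_of_sq_norm_lt_two_inner (smul_pr_mem_coneLift hβ.le hx) ?_
  rw [hinner]
  linarith [pow_pos (norm_pos_iff.mpr ha_ne) 2]

theorem stmt18_general {n : ℕ} (X : Set (EuclideanSpace ℝ (Fin n)))
    (κ : ℝ) (hκpos : 0 < κ)
    (ω : ℕ → ℝ)
    (f x : ℕ → EuclideanSpace ℝ (Fin n)) (hx : ∀ t ≥ 1, x t ∈ X)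
    (u : ℕ → EuclideanSpace ℝ (Fin (n + 1)))
    -- CBA⁺ recursion: `u_t = π_C(u_{t-1} + ω_t • (⟨f_t, x_t⟩/κ, −f_t))`
    (hu : ∀ t ≥ 1, IsProjOn (u (t - 1) + ω t • pr (⟪f t, x t⟫ / κ) (-(f t)))
      (coneLift κ X) (u t))
    -- CBA⁺ choice rule: `x_{t+1}` is read off from `u_t` whenever `u_t ≠ 0`
    (hchoice : ∀ t, u t ≠ 0 → ∃ β : ℝ, 0 < β ∧ u t = β • pr κ (x (t + 1))) :
    -- one-step claim: the projected update of a nonzero `u = β • (κ, x) ∈ C` is nonzero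
    (∀ β : ℝ, 0 < β → ∀ x' ∈ X, ∀ f' : EuclideanSpace ℝ (Fin n), ∀ ω' : ℝ, 0 < ω' →
      ∀ w : EuclideanSpace ℝ (Fin (n + 1)),
        IsProjOn (β • pr κ x' + ω' • pr (⟪f', x'⟫ / κ) (-f')) (coneLift κ X) w →
        w ≠ 0) ∧
    -- consequence along the iterates
    (∀ t t' : ℕ, t ≤ t' → u t ≠ 0 → u t' ≠ 0) := by
  refine ⟨fun β hβ x' hx' f' _ _ _ hw ↦
    isProjOn_coneLift_update_ne_zero hκpos.ne' hβ hx' f' hw, ?_⟩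
  intro t t' htt' hut
  induction t', htt' using Nat.le_induction with
  | base => exact hut
  | succ s _ hus =>
    obtain ⟨β, hβ, hus_eq⟩ := hchoice s hus
    have hproj := hu (s + 1) s.succ_pos
    rw [Nat.add_sub_cancel, hus_eq] at hproj
    exact isProjOn_coneLift_update_ne_zero hκpos.ne' hβ (hx (s + 1) s.succ_pos) _ hproj

/-- Lemma 5(2): a nonzero CBA⁺ aggregate payoff `u = β • (κ, x)`
(`β > 0`, `x ∈ X`) stays nonzero after one CBA⁺ update; consequently, along the
CBA⁺ iterates `u_t = π_C(u_{t-1} + ω_t v_t)` with the CBA⁺ choice rule, if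
`u_t ≠ 0` then `u_{t'} ≠ 0` for all `t' ≥ t`. -/
theorem stmt18 {n : ℕ} (X : Set (EuclideanSpace ℝ (Fin n)))
    (hXne : X.Nonempty) (hXcv : Convex ℝ X) (hXcp : IsCompact X)
    (κ : ℝ) (hκ : IsGreatest ((fun x => ‖x‖) '' X) κ) (hκpos : 0 < κ)
    (ω : ℕ → ℝ) (hω : ∀ t ≥ 1, 0 < ω t)
    (f x : ℕ → EuclideanSpace ℝ (Fin n)) (hx : ∀ t ≥ 1, x t ∈ X)
    (u : ℕ → EuclideanSpace ℝ (Fin (n + 1)))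
    (hu0 : u 0 = 0)
    -- CBA⁺ recursion: `u_t = π_C(u_{t-1} + ω_t • (⟨f_t, x_t⟩/κ, −f_t))`
    (hu : ∀ t ≥ 1, IsProjOn (u (t - 1) + ω t • pr (⟪f t, x t⟫ / κ) (-(f t)))
      (coneLift κ X) (u t))
    -- CBA⁺ choice rule: `x_{t+1}` is read off from `u_t` whenever `u_t ≠ 0`
    (hchoice : ∀ t, u t ≠ 0 → ∃ β : ℝ, 0 < β ∧ u t = β • pr κ (x (t + 1))) :
    -- one-step claim: the projected update of a nonzero `u = β • (κ, x) ∈ C` is nonzero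
    (∀ β : ℝ, 0 < β → ∀ x' ∈ X, ∀ f' : EuclideanSpace ℝ (Fin n), ∀ ω' : ℝ, 0 < ω' →
      ∀ w : EuclideanSpace ℝ (Fin (n + 1)),
        IsProjOn (β • pr κ x' + ω' • pr (⟪f', x'⟫ / κ) (-f')) (coneLift κ X) w →
        w ≠ 0) ∧
    -- consequence along the iterates
    (∀ t t' : ℕ, t ≤ t' → u t ≠ 0 → u t' ≠ 0) :=
  stmt18_general X κ hκpos ω f x hx u hu hchoice

end
end
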